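/- arXiv:2505.22565 — 2 statements merged into one kernel-verified Lean document; each statement's English description precedes it below -/
import Mathlib

section
/- Let H1, H2, H3, H4 be subgroups of a finite group G with H1 ∩ H2 = 1 (trivial). Then the Ingleton inequality holds for (H1, H2, H3, H4). -/
/-!
Cosets of `A ∩ B` in `A` inject into cosets of `B` in `K`, so `[A : A ∩ B] ≤ [K : B]`, i.e.
`|A| |B| ≤ |K| |A ∩ B|` for subgroups `A, B` of a finite group `K`. Applied inside `H₁` to `H₁ ∩ H₃, H₁ ∩ H₄`, inside `H₂` to
`H₂ ∩ H₃, H₂ ∩ H₄`, and inside `H₃ ∩ H₄` to `H₁ ∩ H₃ ∩ H₄, H₂ ∩ H₃ ∩ H₄` (which meet trivially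
because `H₁ ∩ H₂ = 1`), these three bounds multiply to the Ingleton inequality, all of whose
terms involving `H₁ ∩ H₂` equal `1`.
-/

namespace Subgroup

variable {G : Type*} [Group G]

theorem card_mul_relIndex {H K : Subgroup G} (hHK : H ≤ K) :
    Nat.card H * H.relIndex K = Nat.card K := by
  rw [← relIndex_bot_left, ← relIndex_bot_left, relIndex_mul_relIndex _ _ _ bot_le hHK]

theorem card_mul_card_le_card_mul_card_inf {A B K : Subgroup G} [Finite K]
    (hA : A ≤ K) (hB : B ≤ K) :
    Nat.card A * Nat.card B ≤ Nat.card K * Nat.card (A ⊓ B : Subgroup G) := by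
  have hBK : B.relIndex K ≠ 0 := by
    intro h0
    have := card_mul_relIndex hB
    rw [h0, mul_zero] at this
    exact Nat.card_pos.ne this
  calc Nat.card A * Nat.card B
      = Nat.card (A ⊓ B : Subgroup G) * B.relIndex A * Nat.card B := by
        rw [← inf_relIndex_left, card_mul_relIndex inf_le_left]
    _ ≤ Nat.card (A ⊓ B : Subgroup G) * B.relIndex K * Nat.card B := by
        gcongr
        exact relIndex_le_of_le_right hA hBK
    _ = Nat.card K * Nat.card (A ⊓ B : Subgroup G) := by
        rw [← card_mul_relIndex hB]
        ring

theorem card_mul_card_le_card_of_inf_eq_bot {A B K : Subgroup G} [Finite K]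
    (hA : A ≤ K) (hB : B ≤ K) (hAB : A ⊓ B = ⊥) :
    Nat.card A * Nat.card B ≤ Nat.card K := by
  simpa [hAB] using card_mul_card_le_card_mul_card_inf hA hB

theorem card_inf_mul_card_inf_le (H L M : Subgroup G) [Finite H] :
    Nat.card (H ⊓ L : Subgroup G) * Nat.card (H ⊓ M : Subgroup G) ≤
      Nat.card H * Nat.card (H ⊓ (L ⊓ M) : Subgroup G) := by
  rw [inf_inf_distrib_left]
  exact card_mul_card_le_card_mul_card_inf inf_le_left inf_le_left

end Subgroup

open Subgroup in
theorem stmt8 {G : Type*} [Group G] [Finite G] (H1 H2 H3 H4 : Subgroup G)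
    (h : H1 ⊓ H2 = ⊥) :
    Nat.card (H1 : Subgroup G) * Nat.card (H2 : Subgroup G) * Nat.card (H3 ⊓ H4 : Subgroup G) * Nat.card (H1 ⊓ H2 ⊓ H3 : Subgroup G) * Nat.card (H1 ⊓ H2 ⊓ H4 : Subgroup G) ≥ Nat.card (H1 ⊓ H2 : Subgroup G) * Nat.card (H1 ⊓ H3 : Subgroup G) * Nat.card (H1 ⊓ H4 : Subgroup G) * Nat.card (H2 ⊓ H3 : Subgroup G) * Nat.card (H2 ⊓ H4 : Subgroup G) := by
  have h1 := card_inf_mul_card_inf_le H1 H3 H4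
  have h2 := card_inf_mul_card_inf_le H2 H3 H4
  have h34 : Nat.card (H1 ⊓ (H3 ⊓ H4) : Subgroup G) * Nat.card (H2 ⊓ (H3 ⊓ H4) : Subgroup G) ≤
      Nat.card (H3 ⊓ H4 : Subgroup G) :=
    card_mul_card_le_card_of_inf_eq_bot inf_le_right inf_le_right
      (by rw [inf_inf_inf_comm, h, bot_inf_eq])
  simp only [h, bot_inf_eq, card_bot, mul_one, one_mul, ge_iff_le]
  calc Nat.card (H1 ⊓ H3 : Subgroup G) * Nat.card (H1 ⊓ H4 : Subgroup G) *
        Nat.card (H2 ⊓ H3 : Subgroup G) * Nat.card (H2 ⊓ H4 : Subgroup G)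
      ≤ Nat.card H1 * Nat.card (H1 ⊓ (H3 ⊓ H4) : Subgroup G) *
        (Nat.card H2 * Nat.card (H2 ⊓ (H3 ⊓ H4) : Subgroup G)) := by
        rw [mul_assoc]
        exact Nat.mul_le_mul h1 h2
    _ = Nat.card H1 * Nat.card H2 * (Nat.card (H1 ⊓ (H3 ⊓ H4) : Subgroup G) *
        Nat.card (H2 ⊓ (H3 ⊓ H4) : Subgroup G)) := by ring
    _ ≤ Nat.card H1 * Nat.card H2 * Nat.card (H3 ⊓ H4 : Subgroup G) := by gcongr
end

section
/- Let G be a finite group, (H1,H2,H3,H4) an Ingleton offender in G, and N a normal subgroup of G with N ≤ H1 ∩ H2. Then (H1, H2, NH3, H4) is also an Ingleton offender, where NH3 is the subgroup product of N and H3. -/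
/-!
Write `K = N ⊔ H3 = N H3`. Since `N` is normal, intersecting with a subgroup `A ⊇ N` obeys the
modular law `A ⊓ K = N ⊔ (A ⊓ H3)`, so by the product formula each of `H1 ⊓ K`, `H2 ⊓ K` and
`H1 ⊓ H2 ⊓ K` is exactly `|N| / |N ⊓ H3|` times as large as the corresponding intersection with
`H3`. For `K ⊓ H4` the same factor is only an upper bound, since `[K ⊓ H4 : H3 ⊓ H4] ≤ [K : H3]`.
Replacing `H3` by `K` therefore multiplies the right side of the Ingleton inequality by the
square of the factor and the left side by at most that square.
-/

open Subgroup

def IsIngletonOffender {G : Type*} [Group G] (H1 H2 H3 H4 : Subgroup G) : Prop :=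
  Nat.card H1 * Nat.card H2 * Nat.card (H3 ⊓ H4 : Subgroup G) *
      Nat.card (H1 ⊓ H2 ⊓ H3 : Subgroup G) * Nat.card (H1 ⊓ H2 ⊓ H4 : Subgroup G) <
    Nat.card (H1 ⊓ H2 : Subgroup G) * Nat.card (H1 ⊓ H3 : Subgroup G) *
      Nat.card (H1 ⊓ H4 : Subgroup G) * Nat.card (H2 ⊓ H3 : Subgroup G) *
      Nat.card (H2 ⊓ H4 : Subgroup G)

namespace Subgroup

variable {G : Type*} [Group G]

theorem card_inf_mul_relIndex (H K : Subgroup G) :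
    Nat.card (H ⊓ K : Subgroup G) * H.relIndex K = Nat.card K := by
  rw [← inf_relIndex_right, ← relIndex_bot_left, ← relIndex_bot_left,
    relIndex_mul_relIndex _ _ _ bot_le inf_le_right]

theorem card_sup_mul_card_inf (N H : Subgroup G) [N.Normal] :
    Nat.card (N ⊔ H : Subgroup G) * Nat.card (N ⊓ H : Subgroup G) = Nat.card N * Nat.card H := by
  have hsup := card_inf_mul_relIndex N (N ⊔ H)
  rw [inf_sup_self, relIndex_sup_left] at hsup
  rw [← hsup, ← card_inf_mul_relIndex N H]
  ring

theorem inf_sup_eq_sup_inf_of_normal_le {N A : Subgroup G} [N.Normal] (hNA : N ≤ A)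
    (H : Subgroup G) : A ⊓ (N ⊔ H) = N ⊔ A ⊓ H := by
  apply SetLike.coe_injective
  rw [normal_mul, inf_comm A H, mul_inf_assoc _ _ _ hNA, coe_inf, normal_mul, Set.inter_comm]

theorem card_inf_sup_mul_card_inf_of_normal_le {N A : Subgroup G} [N.Normal] (hNA : N ≤ A)
    (H : Subgroup G) :
    Nat.card (A ⊓ (N ⊔ H) : Subgroup G) * Nat.card (N ⊓ H : Subgroup G) =
      Nat.card N * Nat.card (A ⊓ H : Subgroup G) := by
  have hNAH : N ⊓ (A ⊓ H) = N ⊓ H := by rw [← inf_assoc, inf_eq_left.mpr hNA]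
  rw [inf_sup_eq_sup_inf_of_normal_le hNA, ← hNAH, card_sup_mul_card_inf]

variable [Finite G]

theorem card_inf_mul_card_le_of_le {H K : Subgroup G} (hHK : H ≤ K) (L : Subgroup G) :
    Nat.card (K ⊓ L : Subgroup G) * Nat.card H ≤ Nat.card K * Nat.card (H ⊓ L : Subgroup G) := by
  have hK := card_inf_mul_relIndex H K
  have hKL := card_inf_mul_relIndex H (K ⊓ L)
  rw [inf_eq_left.mpr hHK] at hK
  rw [← inf_assoc, inf_eq_left.mpr hHK] at hKL
  have hle : H.relIndex (K ⊓ L) ≤ H.relIndex K :=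
    relIndex_le_of_le_right inf_le_left index_ne_zero_of_finite
  rw [← hK, ← hKL]
  calc Nat.card (H ⊓ L : Subgroup G) * H.relIndex (K ⊓ L) * Nat.card H
      ≤ Nat.card (H ⊓ L : Subgroup G) * H.relIndex K * Nat.card H := by gcongr
    _ = Nat.card H * H.relIndex K * Nat.card (H ⊓ L : Subgroup G) := by ring

theorem card_sup_inf_mul_card_inf_le (N H L : Subgroup G) [N.Normal] :
    Nat.card ((N ⊔ H) ⊓ L : Subgroup G) * Nat.card (N ⊓ H : Subgroup G) ≤
      Nat.card N * Nat.card (H ⊓ L : Subgroup G) := by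
  refine Nat.le_of_mul_le_mul_right ?_ (Nat.card_pos (α := H))
  calc Nat.card ((N ⊔ H) ⊓ L : Subgroup G) * Nat.card (N ⊓ H : Subgroup G) * Nat.card H
      = Nat.card ((N ⊔ H) ⊓ L : Subgroup G) * Nat.card H * Nat.card (N ⊓ H : Subgroup G) := by
        ring
    _ ≤ Nat.card (N ⊔ H : Subgroup G) * Nat.card (H ⊓ L : Subgroup G) *
          Nat.card (N ⊓ H : Subgroup G) := by
        gcongr ?_ * _
        exact card_inf_mul_card_le_of_le le_sup_right L
    _ = Nat.card N * Nat.card (H ⊓ L : Subgroup G) * Nat.card H := by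
        rw [mul_right_comm, card_sup_mul_card_inf]
        ring

end Subgroup

theorem IsIngletonOffender.normal_sup {G : Type*} [Group G] [Finite G]
    {H1 H2 H3 H4 N : Subgroup G} [N.Normal] (hoff : IsIngletonOffender H1 H2 H3 H4)
    (hN : N ≤ H1 ⊓ H2) : IsIngletonOffender H1 H2 (N ⊔ H3) H4 := by
  have h1 := card_inf_sup_mul_card_inf_of_normal_le (hN.trans inf_le_left) H3
  have h2 := card_inf_sup_mul_card_inf_of_normal_le (hN.trans inf_le_right) H3
  have h12 := card_inf_sup_mul_card_inf_of_normal_le hN H3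
  have h4 := card_sup_inf_mul_card_inf_le N H3 H4
  unfold IsIngletonOffender at hoff ⊢
  set n := Nat.card N
  set m := Nat.card (N ⊓ H3 : Subgroup G)
  set P := Nat.card H1 * Nat.card H2 * Nat.card (H1 ⊓ H2 ⊓ H4 : Subgroup G)
  set Q := Nat.card (H1 ⊓ H2 : Subgroup G) * Nat.card (H1 ⊓ H4 : Subgroup G) *
    Nat.card (H2 ⊓ H4 : Subgroup G)
  have hn : 0 < n * n := Nat.mul_pos Nat.card_pos Nat.card_pos
  refine Nat.lt_of_mul_lt_mul_right (a := m * m) ?_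
  calc _ = P * (Nat.card ((N ⊔ H3) ⊓ H4 : Subgroup G) * m) *
        (Nat.card (H1 ⊓ H2 ⊓ (N ⊔ H3) : Subgroup G) * m) := by ring
    _ ≤ P * (n * Nat.card (H3 ⊓ H4 : Subgroup G)) *
        (n * Nat.card (H1 ⊓ H2 ⊓ H3 : Subgroup G)) := by rw [h12]; gcongr
    _ = n * n * (Nat.card H1 * Nat.card H2 * Nat.card (H3 ⊓ H4 : Subgroup G) *
        Nat.card (H1 ⊓ H2 ⊓ H3 : Subgroup G) * Nat.card (H1 ⊓ H2 ⊓ H4 : Subgroup G)) := by ring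
    _ < n * n * (Nat.card (H1 ⊓ H2 : Subgroup G) * Nat.card (H1 ⊓ H3 : Subgroup G) *
        Nat.card (H1 ⊓ H4 : Subgroup G) * Nat.card (H2 ⊓ H3 : Subgroup G) *
        Nat.card (H2 ⊓ H4 : Subgroup G)) := Nat.mul_lt_mul_of_pos_left hoff hn
    _ = Q * (n * Nat.card (H1 ⊓ H3 : Subgroup G)) * (n * Nat.card (H2 ⊓ H3 : Subgroup G)) := by
        ring
    _ = _ := by rw [← h1, ← h2]; ring

theorem stmt17 {G : Type*} [Group G] [Finite G] (H1 H2 H3 H4 N : Subgroup G)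
    [N.Normal] (hN : N ≤ H1 ⊓ H2)
    (hoff : Nat.card (H1 : Subgroup G) * Nat.card (H2 : Subgroup G) * Nat.card (H3 ⊓ H4 : Subgroup G) * Nat.card (H1 ⊓ H2 ⊓ H3 : Subgroup G) * Nat.card (H1 ⊓ H2 ⊓ H4 : Subgroup G) < Nat.card (H1 ⊓ H2 : Subgroup G) * Nat.card (H1 ⊓ H3 : Subgroup G) * Nat.card (H1 ⊓ H4 : Subgroup G) * Nat.card (H2 ⊓ H3 : Subgroup G) * Nat.card (H2 ⊓ H4 : Subgroup G)) :
    Nat.card (H1 : Subgroup G) * Nat.card (H2 : Subgroup G) * Nat.card ((N ⊔ H3) ⊓ H4 : Subgroup G) * Nat.card (H1 ⊓ H2 ⊓ (N ⊔ H3) : Subgroup G) * Nat.card (H1 ⊓ H2 ⊓ H4 : Subgroup G) < Nat.card (H1 ⊓ H2 : Subgroup G) * Nat.card (H1 ⊓ (N ⊔ H3) : Subgroup G) * Nat.card (H1 ⊓ H4 : Subgroup G) * Nat.card (H2 ⊓ (N ⊔ H3) : Subgroup G) * Nat.card (H2 ⊓ H4 : Subgroup G) :=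
  IsIngletonOffender.normal_sup hoff hN
end
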